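/- Lemma 3.1 part 5: For every integer m ≥ 2, |⟨1, Ψ^{(m)}(1)⟩| ≤ 4·(2c)^{m−2}·b². -/

import Mathlib

open Matrix MeasureTheory Finset
open scoped ComplexOrder
noncomputable section

/-- The algebra `M_d(ℂ)` of `d × d` complex matrices. -/
abbrev Md (d : ℕ) := Matrix (Fin d) (Fin d) ℂ

/-- KMS inner product `⟨x,y⟩ = tr(s x* s y)` where `s = σ^{1/2}`. -/
def kmsInner {d : ℕ} (s x y : Md d) : ℂ := (s * xᴴ * s * y).trace

/-- KMS norm `‖x‖₂ = tr(s x* s x)^{1/2}` where `s = σ^{1/2}`. -/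
def kmsNorm {d : ℕ} (s x : Md d) : ℝ := Real.sqrt ((s * xᴴ * s * x).trace.re)

/-- Operator norm of a map on `M_d(ℂ)` induced by the KMS norm. -/
def kmsOpNorm {d : ℕ} (s : Md d) (η : Md d → Md d) : ℝ :=
  sInf {C : ℝ | 0 ≤ C ∧ ∀ x, kmsNorm s (η x) ≤ C * kmsNorm s x}

/-- Spectral (operator) norm of a matrix, i.e. the operator norm of the induced map
on Euclidean space. -/
def specNorm {d : ℕ} (x : Md d) : ℝ :=
  ‖(LinearMap.toContinuousLinearMap (Matrix.toEuclideanLin x))‖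

/-- The positive square root `σ^{1/2}` of a positive definite state. -/
def sqrtm {d : ℕ} (σ : Md d) (hσ : σ.PosDef) : Md d := (hσ.posSemidef.1.eigenvectorUnitary : Md d) *
    diagonal ((↑) ∘ (√·) ∘ hσ.posSemidef.1.eigenvalues) *
    star (hσ.posSemidef.1.eigenvectorUnitary : Md d)

/-- The quantum channel (Heisenberg picture) `Φ(x) = Σ_i V_i* x V_i`. -/
def channel {d : ℕ} {I : Type*} [Fintype I] (V : I → Md d) (x : Md d) : Md d :=
  ∑ i, (V i)ᴴ * x * V i

/-- The dual (Schrödinger picture) channel `Φ*(ρ) = Σ_i V_i ρ V_i*`. -/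
def channelDual {d : ℕ} {I : Type*} [Fintype I] (V : I → Md d) (ρ : Md d) : Md d :=
  ∑ i, V i * ρ * (V i)ᴴ

/-- The KMS adjoint `Φ† = Γ_σ^{-1/2} ∘ Φ* ∘ Γ_σ^{1/2}` of the channel with Kraus
operators `V`, where `s = σ^{1/2}`. -/
def channelKMSAdj {d : ℕ} {I : Type*} [Fintype I] (V : I → Md d) (s : Md d) (x : Md d) : Md d :=
  s⁻¹ * channelDual V (s * x * s) * s⁻¹

/-- Irreducibility of a completely positive map given by Kraus operators `W`:
for every nonzero `v` the span of all `W_{j_n} ⋯ W_{j_1} v` is everything. -/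
def IrredKraus {d : ℕ} {J : Type*} (W : J → Md d) : Prop :=
  ∀ v : Fin d → ℂ, v ≠ 0 →
    Submodule.span ℂ {u : Fin d → ℂ | ∃ l : List J, u = ((l.map W).prod).mulVec v} = ⊤

/-- The operator `V_{i_n} ⋯ V_{i_1}` associated with a measurement trajectory. -/
def trajOp {d : ℕ} {I : Type*} (V : I → Md d) {n : ℕ} (ω : Fin n → I) : Md d :=
  ((List.ofFn fun k => V (ω k)).reverse).prod

/-- The probability `tr(V_{i_n} ⋯ V_{i_1} ρ V_{i_1}* ⋯ V_{i_n}*)` of a trajectory. -/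
def trajProb {d : ℕ} {I : Type*} (V : I → Md d) (ρ : Md d) {n : ℕ} (ω : Fin n → I) : ℝ :=
  ((trajOp V ω) * ρ * (trajOp V ω)ᴴ).trace.re

/-- The function `h(x) = 1/(√(1+x) + x/2 + 1)` from the Bernstein bound. -/
def hfun (x : ℝ) : ℝ := (Real.sqrt (1 + x) + x / 2 + 1)⁻¹

/-- The norm `‖(Id - Φ)^{-1}|_F‖_∞` of the inverse of `Id - Φ` on
`F = {x : tr(σ x) = 0}`, with respect to the spectral norm. -/
def pseudoResNorm {d : ℕ} {I : Type*} [Fintype I] (V : I → Md d) (σ : Md d) : ℝ :=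
  sInf {C : ℝ | 0 ≤ C ∧ ∀ x : Md d, (σ * x).trace = 0 →
    specNorm x ≤ C * specNorm (x - channel V x)}

/-- The deformed map `Φ^{(k)}(x) = Σ_i f(i)^k V_i* x V_i`. -/
def phiK {d : ℕ} {I : Type*} [Fintype I] (V : I → Md d) (f : I → ℝ) (k : ℕ)
    (x : Md d) : Md d :=
  ∑ i, ((f i : ℂ) ^ k) • ((V i)ᴴ * x * V i)

/-- The KMS adjoint `Φ^{(k)†}` of `Φ^{(k)}`, where `s = σ^{1/2}`. -/
def phiKDag {d : ℕ} {I : Type*} [Fintype I] (V : I → Md d) (f : I → ℝ) (s : Md d) (k : ℕ)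
    (x : Md d) : Md d :=
  s⁻¹ * (∑ i, ((f i : ℂ) ^ k) • (V i * (s * x * s) * (V i)ᴴ)) * s⁻¹

/-- The map `Ψ^{(m)} = Σ_{l=0}^m binom(m,l) Φ^{(l)†} ∘ Φ^{(m−l)}`. -/
def psiM {d : ℕ} {I : Type*} [Fintype I] (V : I → Md d) (f : I → ℝ) (s : Md d) (m : ℕ)
    (x : Md d) : Md d :=
  ∑ l ∈ Finset.range (m + 1), (m.choose l : ℂ) • phiKDag V f s l (phiK V f (m - l) x)

/-! With `s = σ^{1/2}`, KMS-adjointness of `Φ^{(l)†}` turns `⟨1, Ψ^{(m)}(1)⟩` into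
`Σ_l binom(m,l) ⟨Φ^{(l)}(1), Φ^{(m-l)}(1)⟩ = Σ_{i,j} (f(i) + f(j))^m G_{ij}`, where
`G_{ij} = ⟨V_i* V_i, V_j* V_j⟩ = tr((V_i s V_j*)* (V_i s V_j*))` is nonnegative, symmetric, and has
row sums `π(i)` because `Σ_j V_j* V_j = 1`. Then `|f(i) + f(j)|^m ≤ (2c)^{m-2} (2 f(i)² + 2 f(j)²)`
and summing against `G` gives `4 (2c)^{m-2} π(f²)`. -/

lemma abs_add_pow_le {x y c : ℝ} (hx : |x| ≤ c) (hy : |y| ≤ c) {m : ℕ} (hm : 2 ≤ m) :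
    |(x + y) ^ m| ≤ (2 * c) ^ (m - 2) * (2 * x ^ 2 + 2 * y ^ 2) := by
  obtain ⟨k, rfl⟩ := Nat.exists_eq_add_of_le' hm
  have hxy : |x + y| ≤ 2 * c := (abs_add_le x y).trans (by linarith)
  rw [Nat.add_sub_cancel, abs_pow, pow_add, sq_abs]
  gcongr
  · exact pow_nonneg ((abs_nonneg _).trans hxy) k
  · nlinarith [sq_nonneg (x - y)]

lemma abs_sum_add_pow_mul_le {I : Type*} [Fintype I] {f : I → ℝ} {c : ℝ} (hf : ∀ i, |f i| ≤ c)
    {a : I → I → ℝ} (ha : ∀ i j, 0 ≤ a i j) (ha_symm : ∀ i j, a i j = a j i) {m : ℕ}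
    (hm : 2 ≤ m) :
    |∑ i, ∑ j, (f i + f j) ^ m * a i j| ≤ 4 * (2 * c) ^ (m - 2) * ∑ i, f i ^ 2 * ∑ j, a i j := by
  have h_swap : ∑ i, ∑ j, f j ^ 2 * a i j = ∑ i, f i ^ 2 * ∑ j, a i j := by
    rw [Finset.sum_comm]
    simp only [Finset.mul_sum, ha_symm]
  calc |∑ i, ∑ j, (f i + f j) ^ m * a i j|
      ≤ ∑ i, ∑ j, |(f i + f j) ^ m| * a i j := by
        refine (Finset.abs_sum_le_sum_abs _ _).trans (Finset.sum_le_sum fun i _ => ?_)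
        refine (Finset.abs_sum_le_sum_abs _ _).trans_eq (Finset.sum_congr rfl fun j _ => ?_)
        rw [abs_mul, abs_of_nonneg (ha i j)]
    _ ≤ ∑ i, ∑ j, (2 * c) ^ (m - 2) * (2 * f i ^ 2 + 2 * f j ^ 2) * a i j := by
        gcongr with i _ j _
        · exact ha i j
        · exact abs_add_pow_le (hf i) (hf j) hm
    _ = 2 * (2 * c) ^ (m - 2) *
          (∑ i, f i ^ 2 * ∑ j, a i j + ∑ i, ∑ j, f j ^ 2 * a i j) := by
        simp only [Finset.mul_sum, ← Finset.sum_add_distrib]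
        refine Finset.sum_congr rfl fun i _ => Finset.sum_congr rfl fun j _ => by ring
    _ = 4 * (2 * c) ^ (m - 2) * ∑ i, f i ^ 2 * ∑ j, a i j := by rw [h_swap]; ring

lemma sqrtm_eq_cfc {d : ℕ} {σ : Md d} (hσ : σ.PosDef) : sqrtm σ hσ = cfc Real.sqrt σ := by
  rw [hσ.posSemidef.1.cfc_eq, IsHermitian.cfc, Unitary.conjStarAlgAut_apply]
  rfl

lemma sqrtm_mul_self {d : ℕ} {σ : Md d} (hσ : σ.PosDef) : sqrtm σ hσ * sqrtm σ hσ = σ := by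
  have hσsa : IsSelfAdjoint σ := hσ.posSemidef.1
  rw [sqrtm_eq_cfc, ← cfc_mul Real.sqrt Real.sqrt σ]
  conv_rhs => rw [← cfc_id' ℝ σ]
  refine cfc_congr fun x hx => Real.mul_self_sqrt ?_
  obtain ⟨i, rfl⟩ := hσ.posSemidef.1.spectrum_real_eq_range_eigenvalues ▸ hx
  exact hσ.posSemidef.eigenvalues_nonneg i

lemma sqrtm_isHermitian {d : ℕ} {σ : Md d} (hσ : σ.PosDef) : (sqrtm σ hσ).IsHermitian := by
  rw [sqrtm_eq_cfc]; exact cfc_predicate _ _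

lemma isUnit_det_sqrtm {d : ℕ} {σ : Md d} (hσ : σ.PosDef) : IsUnit (sqrtm σ hσ).det := by
  have h := hσ.isUnit.map detMonoidHom
  rw [← sqrtm_mul_self hσ, map_mul] at h
  exact (IsUnit.mul_iff.mp h).1

section KMS

variable {d : ℕ} {I : Type*} [Fintype I]

lemma kmsInner_sum_smul_sum_smul (s : Md d) (a b : I → ℂ) (x y : I → Md d) :
    kmsInner s (∑ i, a i • x i) (∑ j, b j • y j) =
      ∑ i, ∑ j, star (a i) * b j * kmsInner s (x i) (y j) := by
  simp only [kmsInner, conjTranspose_sum, conjTranspose_smul, Finset.mul_sum, Finset.sum_mul,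
    trace_sum, Matrix.mul_smul, Matrix.smul_mul, trace_smul, smul_eq_mul]
  rw [Finset.sum_comm]
  refine Finset.sum_congr rfl fun i _ => Finset.sum_congr rfl fun j _ => by ring

lemma phiK_one (V : I → Md d) (f : I → ℝ) (k : ℕ) :
    phiK V f k 1 = ∑ i, ((f i : ℂ) ^ k) • ((V i)ᴴ * V i) := by
  simp only [phiK, mul_one]

lemma kmsInner_phiKDag (V : I → Md d) (f : I → ℝ) {s : Md d} (hs : IsUnit s.det) (k : ℕ)
    (x y : Md d) : kmsInner s y (phiKDag V f s k x) = kmsInner s (phiK V f k y) x := by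
  simp only [kmsInner, phiKDag, phiK, conjTranspose_sum, conjTranspose_smul, Finset.mul_sum,
    Finset.sum_mul, trace_sum, Matrix.mul_smul, Matrix.smul_mul, trace_smul]
  refine Finset.sum_congr rfl fun i _ => ?_
  rw [star_pow, Complex.star_def, Complex.conj_ofReal]
  congr 1
  rw [← mul_assoc, trace_mul_comm]
  simp only [conjTranspose_mul, conjTranspose_conjTranspose, mul_assoc,
    mul_nonsing_inv_cancel_left _ _ hs, nonsing_inv_mul_cancel_left _ _ hs]
  rw [trace_mul_comm s]
  simp only [mul_assoc]
  rw [trace_mul_comm (V i)ᴴ]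
  simp only [mul_assoc]

lemma kmsInner_sum_smul_right {ι : Type*} (s x : Md d) (t : Finset ι) (a : ι → ℂ)
    (y : ι → Md d) : kmsInner s x (∑ l ∈ t, a l • y l) = ∑ l ∈ t, a l * kmsInner s x (y l) := by
  simp only [kmsInner, Finset.mul_sum, trace_sum, Matrix.mul_smul, trace_smul, smul_eq_mul]

lemma kmsInner_one_psiM_one (V : I → Md d) (f : I → ℝ) {s : Md d} (hs : IsUnit s.det) (m : ℕ) :
    kmsInner s 1 (psiM V f s m 1) =
      ∑ i, ∑ j, ((f i + f j : ℝ) : ℂ) ^ m * kmsInner s ((V i)ᴴ * V i) ((V j)ᴴ * V j) := by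
  calc kmsInner s 1 (psiM V f s m 1)
      = ∑ l ∈ range (m + 1), (m.choose l : ℂ) * kmsInner s (phiK V f l 1) (phiK V f (m - l) 1) := by
        simp only [psiM, kmsInner_sum_smul_right, kmsInner_phiKDag V f hs]
    _ = ∑ l ∈ range (m + 1), ∑ i, ∑ j, (m.choose l : ℂ) * ((f i : ℂ) ^ l * (f j : ℂ) ^ (m - l)) *
          kmsInner s ((V i)ᴴ * V i) ((V j)ᴴ * V j) := by
        simp only [phiK_one, kmsInner_sum_smul_sum_smul, star_pow, Complex.star_def,
          Complex.conj_ofReal, Finset.mul_sum]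
        refine Finset.sum_congr rfl fun l _ => Finset.sum_congr rfl fun i _ =>
          Finset.sum_congr rfl fun j _ => by ring
    _ = _ := by
        rw [Finset.sum_comm]
        refine Finset.sum_congr rfl fun i _ => ?_
        rw [Finset.sum_comm]
        refine Finset.sum_congr rfl fun j _ => ?_
        rw [← Finset.sum_mul, Complex.ofReal_add, add_pow]
        refine congrArg (· * _) (Finset.sum_congr rfl fun l _ => by ring)

lemma kmsInner_comm_of_isHermitian (s : Md d) {x y : Md d} (hx : x.IsHermitian)
    (hy : y.IsHermitian) : kmsInner s x y = kmsInner s y x := by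
  rw [kmsInner, kmsInner, hx.eq, hy.eq, mul_assoc (s * x), trace_mul_comm, ← mul_assoc]

lemma kmsInner_conjTranspose_mul_self_nonneg {s : Md d} (hs : s.IsHermitian) (A B : Md d) :
    0 ≤ kmsInner s (Aᴴ * A) (Bᴴ * B) := by
  have h : kmsInner s (Aᴴ * A) (Bᴴ * B) = ((A * s * Bᴴ)ᴴ * (A * s * Bᴴ)).trace := by
    rw [kmsInner, ← mul_assoc, trace_mul_comm _ B]
    simp only [conjTranspose_mul, conjTranspose_conjTranspose, hs.eq, mul_assoc]
  rw [h]
  exact (posSemidef_conjTranspose_mul_self _).trace_nonneg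

lemma sum_kmsInner_kraus_right (V : I → Md d) (hV : ∑ j, (V j)ᴴ * V j = 1) (s x : Md d) :
    ∑ j, kmsInner s x ((V j)ᴴ * V j) = (s * s * xᴴ).trace := by
  simp only [kmsInner, ← trace_sum, ← Finset.mul_sum, hV, mul_one]
  rw [trace_mul_comm, ← mul_assoc]

end KMS

theorem lemma31_part5_general
    {d : ℕ} {I : Type*} [Fintype I]
    (V : I → Md d) (hV : ∑ i, (V i)ᴴ * V i = 1)
    (σ : Md d) (hσ : σ.PosDef)
    (f : I → ℝ) (b c : ℝ)
    -- max_i |f(i)| = c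
    (hbdd : ∀ i, |f i| ≤ c)
    -- π(f²) = b²
    (hvar : ∑ i, (f i) ^ 2 * ((σ * ((V i)ᴴ * V i)).trace).re = b ^ 2)
    (m : ℕ) (hm : 2 ≤ m) :
    ‖kmsInner (sqrtm σ hσ) 1 (psiM V f (sqrtm σ hσ) m 1)‖ ≤
      4 * (2 * c) ^ (m - 2) * b ^ 2 := by
  set s := sqrtm σ hσ
  set G : I → I → ℂ := fun i j => kmsInner s ((V i)ᴴ * V i) ((V j)ᴴ * V j)
  have hG_nonneg (i j : I) : 0 ≤ G i j :=
    kmsInner_conjTranspose_mul_self_nonneg (sqrtm_isHermitian hσ) _ _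
  have hG_real (i j : I) : G i j = (G i j).re :=
    Complex.eq_re_of_ofReal_le (Complex.ofReal_zero ▸ hG_nonneg i j)
  have hG_symm (i j : I) : (G i j).re = (G j i).re := by
    simp only [G, kmsInner_comm_of_isHermitian s (isHermitian_conjTranspose_mul_self (V i))
      (isHermitian_conjTranspose_mul_self (V j))]
  have hG_row (i : I) : ∑ j, (G i j).re = (σ * ((V i)ᴴ * V i)).trace.re := by
    rw [← Complex.re_sum, sum_kmsInner_kraus_right V hV, sqrtm_mul_self,
      (isHermitian_conjTranspose_mul_self (V i)).eq]
  have h_expand : kmsInner s 1 (psiM V f s m 1) =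
      ((∑ i, ∑ j, (f i + f j) ^ m * (G i j).re : ℝ) : ℂ) := by
    rw [kmsInner_one_psiM_one V f (isUnit_det_sqrtm hσ)]
    push_cast
    simp only [← hG_real]
    rfl
  rw [h_expand, Complex.norm_real, Real.norm_eq_abs, ← hvar]
  simp only [← hG_row]
  exact abs_sum_add_pow_mul_le hbdd (fun i j => (Complex.nonneg_iff.mp (hG_nonneg i j)).1) hG_symm hm

/-- **Lemma 3.1 part 5**: for `m ≥ 2`, `|⟨1, Ψ^{(m)}(1)⟩| ≤ 4 (2c)^{m−2} b²`. -/
theorem lemma31_part5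
    {d : ℕ} (hd : 1 ≤ d) {I : Type*} [Fintype I] [Nonempty I]
    (V : I → Md d) (hV : ∑ i, (V i)ᴴ * V i = 1)
    (σ : Md d) (hσ : σ.PosDef) (hσtr : σ.trace = 1)
    (hinv : channelDual V σ = σ)
    (f : I → ℝ) (b c : ℝ) (hb : 0 ≤ b)
    -- max_i |f(i)| = c
    (hbdd : ∀ i, |f i| ≤ c) (hatt : ∃ i, |f i| = c)
    -- π(f²) = b²
    (hvar : ∑ i, (f i) ^ 2 * ((σ * ((V i)ᴴ * V i)).trace).re = b ^ 2)
    (m : ℕ) (hm : 2 ≤ m) :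
    ‖kmsInner (sqrtm σ hσ) 1 (psiM V f (sqrtm σ hσ) m 1)‖ ≤
      4 * (2 * c) ^ (m - 2) * b ^ 2 :=
  lemma31_part5_general V hV σ hσ f b c hbdd hvar m hm
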